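/- arXiv:0911.4098 — 2 statements merged into one kernel-verified Lean document; each statement's English description precedes it below -/
import Mathlib

section
/- For every $(\varphi,\psi)\in\mathcal{A}$ and $|\xi|>0$, $E(\varphi,\psi)= -g|\xi|+\frac12\int_{-m}^{\ell}P'(\rho_0)\rho_0(\psi'+|\xi|\varphi)^2+g|\xi|\rho_0(\varphi-\psi)^2\;\ge\;-g|\xi|$. In particular $\inf_{\mathcal{A}}E\ge -g|\xi|$. -/
/-!
Expanding the square, `-2ψφ = (φ - ψ)² - (φ² + ψ²)`, so the coupling term of `E` equals
`g|ξ|ρ₀(φ - ψ)²` minus `g|ξ|ρ₀(φ² + ψ²)`, and the latter integrates to `2g|ξ|` on `𝒜`.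
What remains is the integral of a sum of squares with nonnegative weights.
-/

open Set MeasureTheory
open scoped Interval

section

variable {μ : Measure ℝ} {a b : ℝ}

theorem ae_restrict_Icc_of_forall_Ioo [NullSingletonClass μ] {p : ℝ → Prop}
    (h : ∀ x ∈ Ioo a b, p x) : ∀ᵐ x ∂μ.restrict (Icc a b), p x :=
  (ae_restrict_congr_set Ioo_ae_eq_Icc).1 (ae_restrict_of_forall_mem measurableSet_Ioo h)

theorem IntervalIntegrable.bdd_mul_of_Ioo [NullSingletonClass μ] (hab : a ≤ b)
    {f g : ℝ → ℝ} {C : ℝ} (hg : IntervalIntegrable g μ a b) (hf : AEStronglyMeasurable f μ)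
    (hfC : ∀ x ∈ Ioo a b, |f x| ≤ C) : IntervalIntegrable (fun x => f x * g x) μ a b := by
  rw [intervalIntegrable_iff_integrableOn_Ioc_of_le hab] at hg ⊢
  exact hg.bdd_mul hf.restrict <| ae_restrict_of_ae_restrict_of_subset Ioc_subset_Icc_self <|
    ae_restrict_Icc_of_forall_Ioo hfC

theorem IntervalIntegrable.sq_add {u v : ℝ → ℝ}
    (hu : AEStronglyMeasurable u (μ.restrict (Ι a b)))
    (hv : AEStronglyMeasurable v (μ.restrict (Ι a b)))
    (hu2 : IntervalIntegrable (fun x => u x ^ 2) μ a b)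
    (hv2 : IntervalIntegrable (fun x => v x ^ 2) μ a b) :
    IntervalIntegrable (fun x => (u x + v x) ^ 2) μ a b := by
  rw [intervalIntegrable_iff] at hu2 hv2 ⊢
  exact (((memLp_two_iff_integrable_sq hu).2 hu2).add
    ((memLp_two_iff_integrable_sq hv).2 hv2)).integrable_sq

end

theorem energy_lower_bound_general
    (m ℓ g ξ : ℝ) (hm : 0 < m) (hℓ : 0 < ℓ) (hg : 0 < g) (hξ : 0 < ξ)
    (ρ0 W : ℝ → ℝ)
    (hW : ∀ x ∈ Ioo (-m) ℓ, 0 ≤ W x)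
    (c C W' : ℝ) (hc : 0 < c)
    (hρbd : ∀ x ∈ Ioo (-m) ℓ, c ≤ ρ0 x ∧ ρ0 x ≤ C)
    (hWbd : ∀ x ∈ Ioo (-m) ℓ, W x ≤ W')
    (hρmeas : Measurable ρ0) (hWmeas : Measurable W)
    (φ ψ : ℝ → ℝ)
    (hφ : ContinuousOn φ (Icc (-m) ℓ))
    (hψcont : ContinuousOn ψ (Icc (-m) ℓ))
    (hψ' : IntervalIntegrable (fun x => (deriv ψ x) ^ 2) MeasureTheory.volume (-m) ℓ)
    (hJ : (1 / 2) * (∫ x in (-m)..ℓ, ρ0 x * ((φ x) ^ 2 + (ψ x) ^ 2)) = 1) :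
    ((1 / 2) * ∫ x in (-m)..ℓ,
        (W x * (deriv ψ x + ξ * φ x) ^ 2 - 2 * g * ρ0 x * ξ * ψ x * φ x))
      = -(g * ξ) + (1 / 2) * ∫ x in (-m)..ℓ,
            (W x * (deriv ψ x + ξ * φ x) ^ 2 + g * ξ * ρ0 x * (φ x - ψ x) ^ 2)
    ∧ -(g * ξ) ≤ (1 / 2) * ∫ x in (-m)..ℓ,
        (W x * (deriv ψ x + ξ * φ x) ^ 2 - 2 * g * ρ0 x * ξ * ψ x * φ x) := by
  have hab : -m ≤ ℓ := by linarith
  rw [← uIcc_of_le hab] at hφ hψcont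
  have hρ_abs : ∀ x ∈ Ioo (-m) ℓ, |ρ0 x| ≤ C := fun x hx =>
    abs_le.2 ⟨by linarith [hρbd x hx], (hρbd x hx).2⟩
  have hW_abs : ∀ x ∈ Ioo (-m) ℓ, |W x| ≤ W' := fun x hx =>
    abs_le.2 ⟨by linarith [hW x hx, hWbd x hx], hWbd x hx⟩
  have hkin : IntervalIntegrable (fun x => W x * (deriv ψ x + ξ * φ x) ^ 2) volume (-m) ℓ :=
    (IntervalIntegrable.sq_add (measurable_deriv ψ).aestronglyMeasurable
      ((hφ.const_smul ξ).mono uIoc_subset_uIcc |>.aestronglyMeasurable measurableSet_uIoc)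
      hψ' ((hφ.const_smul ξ).pow 2).intervalIntegrable).bdd_mul_of_Ioo hab
      hWmeas.aestronglyMeasurable hW_abs
  have hpot : IntervalIntegrable (fun x => g * ξ * ρ0 x * (φ x - ψ x) ^ 2) volume (-m) ℓ := by
    simpa only [mul_assoc, Pi.pow_apply, Pi.sub_apply] using
      (((hφ.sub hψcont).pow 2).intervalIntegrable.bdd_mul_of_Ioo hab
        hρmeas.aestronglyMeasurable hρ_abs).const_mul (g * ξ)
  have hmass : IntervalIntegrable (fun x => ρ0 x * (φ x ^ 2 + ψ x ^ 2)) volume (-m) ℓ :=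
    ((hφ.pow 2).add (hψcont.pow 2)).intervalIntegrable.bdd_mul_of_Ioo hab
      hρmeas.aestronglyMeasurable hρ_abs
  have hsplit : (∫ x in (-m)..ℓ,
        (W x * (deriv ψ x + ξ * φ x) ^ 2 - 2 * g * ρ0 x * ξ * ψ x * φ x))
      = (∫ x in (-m)..ℓ,
          (W x * (deriv ψ x + ξ * φ x) ^ 2 + g * ξ * ρ0 x * (φ x - ψ x) ^ 2))
        - g * ξ * ∫ x in (-m)..ℓ, ρ0 x * (φ x ^ 2 + ψ x ^ 2) := by
    rw [← intervalIntegral.integral_const_mul,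
      ← intervalIntegral.integral_sub (hkin.add hpot) (hmass.const_mul (g * ξ))]
    exact intervalIntegral.integral_congr fun x _ => by ring
  have hnonneg : 0 ≤ ∫ x in (-m)..ℓ,
      (W x * (deriv ψ x + ξ * φ x) ^ 2 + g * ξ * ρ0 x * (φ x - ψ x) ^ 2) :=
    intervalIntegral.integral_nonneg_of_ae_restrict hab <|
      ae_restrict_Icc_of_forall_Ioo fun x hx => by
        have := hW x hx
        have : 0 ≤ ρ0 x := hc.le.trans (hρbd x hx).1
        positivity
  rw [hsplit, show (∫ x in (-m)..ℓ, ρ0 x * (φ x ^ 2 + ψ x ^ 2)) = 2 by linarith]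
  exact ⟨by ring, by linarith⟩

/-- Lower bound on the energy: for `(φ,ψ) ∈ 𝒜` (i.e. `½∫ρ₀(φ²+ψ²)=1`) and `|ξ| > 0`,
`E(φ,ψ) = -g|ξ| + ½∫ W(ψ'+|ξ|φ)² + g|ξ|ρ₀(φ-ψ)² ≥ -g|ξ|`, where `W = P'(ρ₀)ρ₀ ≥ 0`.
In particular `inf_𝒜 E ≥ -g|ξ|`. -/
theorem energy_lower_bound
    (m ℓ g ξ : ℝ) (hm : 0 < m) (hℓ : 0 < ℓ) (hg : 0 < g) (hξ : 0 < ξ)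
    (ρ0 W : ℝ → ℝ)
    (hW : ∀ x ∈ Ioo (-m) ℓ, 0 ≤ W x)
    (c C W' : ℝ) (hc : 0 < c)
    (hρbd : ∀ x ∈ Ioo (-m) ℓ, c ≤ ρ0 x ∧ ρ0 x ≤ C)
    (hWbd : ∀ x ∈ Ioo (-m) ℓ, W x ≤ W')
    (hρmeas : Measurable ρ0) (hWmeas : Measurable W)
    (φ ψ : ℝ → ℝ)
    (hφ : ContinuousOn φ (Icc (-m) ℓ))
    (hψcont : ContinuousOn ψ (Icc (-m) ℓ)) (hψa : ψ (-m) = 0) (hψb : ψ ℓ = 0)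
    (hψdiff : ∀ x ∈ Ioo (-m) ℓ, x ≠ 0 → DifferentiableAt ℝ ψ x)
    (hψ' : IntervalIntegrable (fun x => (deriv ψ x) ^ 2) MeasureTheory.volume (-m) ℓ)
    (hJ : (1 / 2) * (∫ x in (-m)..ℓ, ρ0 x * ((φ x) ^ 2 + (ψ x) ^ 2)) = 1) :
    ((1 / 2) * ∫ x in (-m)..ℓ,
        (W x * (deriv ψ x + ξ * φ x) ^ 2 - 2 * g * ρ0 x * ξ * ψ x * φ x))
      = -(g * ξ) + (1 / 2) * ∫ x in (-m)..ℓ,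
            (W x * (deriv ψ x + ξ * φ x) ^ 2 + g * ξ * ρ0 x * (φ x - ψ x) ^ 2)
    ∧ -(g * ξ) ≤ (1 / 2) * ∫ x in (-m)..ℓ,
        (W x * (deriv ψ x + ξ * φ x) ^ 2 - 2 * g * ρ0 x * ξ * ψ x * φ x) :=
  energy_lower_bound_general m ℓ g ξ hm hℓ hg hξ ρ0 W hW c C W' hc hρbd hWbd hρmeas hWmeas φ ψ hφ
    hψcont hψ' hJ
end

section
/- There exist constants $C_0,C_1,C_2>0$ depending only on $\rho_0^\pm,P_\pm,g,m,\ell$ such that for all $|\xi|\ge C_0$, the variational eigenvalue $\lambda(|\xi|)=\sqrt{-\inf_{\mathcal{A}}E}$ satisfies $\lambda^2(|\xi|)\ge C_1|\xi|-C_2$. Combined with the lower bound $E\ge -g|\xi|$, this gives $0<C\le\lambda(|\xi|)/\sqrt{|\xi|}\le\sqrt{g}$ for all sufficiently large $|\xi|$. -/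
open Set

def RTAdm (m ℓ : ℝ) (φ ψ : ℝ → ℝ) : Prop :=
  ContinuousOn ψ (Icc (-m) ℓ) ∧ ψ (-m) = 0 ∧ ψ ℓ = 0 ∧
  (∀ x ∈ Ioo (-m) ℓ, x ≠ 0 → DifferentiableAt ℝ ψ x) ∧
  IntervalIntegrable (fun x => (φ x) ^ 2) MeasureTheory.volume (-m) ℓ ∧
  IntervalIntegrable (fun x => (deriv ψ x) ^ 2) MeasureTheory.volume (-m) ℓ

/-- `E_ξ(φ,ψ)` with `Q = P'(ρ₀)` evaluated along the steady state. -/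
noncomputable def RTEnergy (m ℓ g ξ : ℝ) (ρ0 Q : ℝ → ℝ) (φ ψ : ℝ → ℝ) : ℝ :=
  (1 / 2) * ∫ x in (-m)..ℓ,
    (Q x * ρ0 x * (deriv ψ x + ξ * φ x) ^ 2 - 2 * g * ρ0 x * ξ * ψ x * φ x)

noncomputable def RTConstraint (m ℓ : ℝ) (ρ0 : ℝ → ℝ) (φ ψ : ℝ → ℝ) : ℝ :=
  (1 / 2) * ∫ x in (-m)..ℓ, ρ0 x * ((φ x) ^ 2 + (ψ x) ^ 2)

/-- The set of energy values on the constraint set `𝒜`, for frequency `ξ`;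
`-λ²(ξ)` is its infimum. -/
def RTEnergyValues (m ℓ g ξ : ℝ) (ρ0 Q : ℝ → ℝ) : Set ℝ :=
  {e : ℝ | ∃ φ ψ : ℝ → ℝ, RTAdm m ℓ φ ψ ∧ RTConstraint m ℓ ρ0 φ ψ = 1 ∧
    e = RTEnergy m ℓ g ξ ρ0 Q φ ψ}

/-!
The lower bound `E ≥ -g ξ J` is pointwise: the pressure term is nonnegative and
`2 ψ φ ≤ φ² + ψ²`. For the upper bound, test with the tent `u = (1 - ξ|x|)₊` of width `1/ξ`
centred at the interface, `ψ = u²` and `φ = -ψ'/ξ = 2 sign(x) u`. This choice kills the pressure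
term, so `E = -g ξ ∫ ρ₀ ψ φ`, and since `ψ φ = 2 sign(x) u³` the integral sees the density jump:
`∫ ρ₀ ψ φ ≥ (ρ₊ - ρ₋)/(4ξ)` as soon as `ξ` is large, because the steady-state ODE bounds `|ρ₀'|`,
so `ρ₀` stays within `O(1/ξ)` of `ρ±` on the support of `u`. As `J ≤ 5C/(3ξ)`, the Rayleigh
quotient `E/J` is at most `-(3 g (ρ₊ - ρ₋)/(20 C)) ξ`.
-/

open MeasureTheory Filter Topology intervalIntegral

lemma abs_sub_le_of_tendsto {f : ℝ → ℝ} {s : Set ℝ} {a L K x : ℝ} [(𝓝[s] a).NeBot]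
    (hlip : ∀ᶠ y in 𝓝[s] a, |f x - f y| ≤ K * |x - y|) (hf : Tendsto f (𝓝[s] a) (𝓝 L)) :
    |f x - L| ≤ K * |x - a| :=
  le_of_tendsto_of_tendsto (tendsto_const_nhds.sub hf).abs
    ((tendsto_const_nhds.sub (tendsto_nhdsWithin_of_tendsto_nhds tendsto_id)).abs.const_mul K)
    hlip

section MeanValue

variable {f f' : ℝ → ℝ} {a b K L : ℝ}

lemma abs_sub_le_of_hasDerivAt_of_tendsto_nhdsGT (hf : ∀ x ∈ Ioo a b, HasDerivAt f (f' x) x)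
    (hK : ∀ x ∈ Ioo a b, |f' x| ≤ K) (hL : Tendsto f (𝓝[>] a) (𝓝 L)) {x : ℝ}
    (hx : x ∈ Ioo a b) : |f x - L| ≤ K * (x - a) := by
  have hlip : ∀ᶠ y in 𝓝[>] a, |f x - f y| ≤ K * |x - y| := by
    filter_upwards [Ioo_mem_nhdsGT hx.1] with y hy
    exact (convex_Ioo a b).norm_image_sub_le_of_norm_hasDerivWithin_le
      (fun z hz => (hf z hz).hasDerivWithinAt) hK ⟨hy.1, hy.2.trans hx.2⟩ hx
  simpa [abs_of_pos (sub_pos.2 hx.1)] using abs_sub_le_of_tendsto hlip hL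

lemma abs_sub_le_of_hasDerivAt_of_tendsto_nhdsLT (hf : ∀ x ∈ Ioo a b, HasDerivAt f (f' x) x)
    (hK : ∀ x ∈ Ioo a b, |f' x| ≤ K) (hL : Tendsto f (𝓝[<] b) (𝓝 L)) {x : ℝ}
    (hx : x ∈ Ioo a b) : |f x - L| ≤ K * (b - x) := by
  have hlip : ∀ᶠ y in 𝓝[<] b, |f x - f y| ≤ K * |x - y| := by
    filter_upwards [Ioo_mem_nhdsLT hx.2] with y hy
    exact (convex_Ioo a b).norm_image_sub_le_of_norm_hasDerivWithin_le
      (fun z hz => (hf z hz).hasDerivWithinAt) hK ⟨hx.1.trans hy.1, hy.2⟩ hx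
  simpa [abs_of_neg (sub_neg.2 hx.2), neg_sub] using abs_sub_le_of_tendsto hlip hL

end MeanValue

lemma abs_neg_mul_div_le {a b c p q : ℝ} (ha : 0 ≤ a) (hb : 0 ≤ b) (hbc : b ≤ c) (hq : 0 < q)
    (hp : q ≤ p) : |-a * b / p| ≤ a * c / q := by
  rw [abs_div, abs_of_pos (hq.trans_le hp), abs_mul, abs_neg, abs_of_nonneg ha, abs_of_nonneg hb]
  exact div_le_div₀ (mul_nonneg ha (hb.trans hbc)) (mul_le_mul_of_nonneg_left hbc ha) hq hp

lemma steadyState_bounds_near_interface {m ℓ g q C rhoP rhoM : ℝ} {ρ0 Q : ℝ → ℝ} (hm : 0 ≤ m)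
    (hℓ : 0 ≤ ℓ) (hg : 0 ≤ g) (hq : 0 < q) (hρ : ∀ x ∈ Ioo (-m) ℓ, 0 ≤ ρ0 x ∧ ρ0 x ≤ C)
    (hQ : ∀ x ∈ Ioo (-m) ℓ, q ≤ Q x)
    (hode : ∀ x ∈ Ioo (-m) ℓ, x ≠ 0 → HasDerivAt ρ0 (-g * ρ0 x / Q x) x)
    (hlimP : Tendsto ρ0 (𝓝[>] 0) (𝓝 rhoP)) (hlimM : Tendsto ρ0 (𝓝[<] 0) (𝓝 rhoM)) :
    (∀ x ∈ Ioo 0 ℓ, rhoP - g * C / q * x ≤ ρ0 x) ∧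
      ∀ x ∈ Ioo (-m) 0, ρ0 x ≤ rhoM - g * C / q * x := by
  have hslope : ∀ x ∈ Ioo (-m) ℓ, |-g * ρ0 x / Q x| ≤ g * C / q := fun x hx =>
    abs_neg_mul_div_le hg (hρ x hx).1 (hρ x hx).2 hq (hQ x hx)
  constructor
  · intro x hx
    have hsub : ∀ y ∈ Ioo 0 ℓ, y ∈ Ioo (-m) ℓ := fun y hy => ⟨by linarith [hy.1], hy.2⟩
    have := abs_sub_le_of_hasDerivAt_of_tendsto_nhdsGT (fun y hy => hode y (hsub y hy) hy.1.ne')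
      (fun y hy => hslope y (hsub y hy)) hlimP hx
    linarith [neg_abs_le (ρ0 x - rhoP)]
  · intro x hx
    have hsub : ∀ y ∈ Ioo (-m) 0, y ∈ Ioo (-m) ℓ := fun y hy => ⟨hy.1, by linarith [hy.2]⟩
    have := abs_sub_le_of_hasDerivAt_of_tendsto_nhdsLT (fun y hy => hode y (hsub y hy) hy.2.ne)
      (fun y hy => hslope y (hsub y hy)) hlimM hx
    linarith [le_abs_self (ρ0 x - rhoM)]

lemma integrableOn_Ioo_of_continuousOn_diff {f : ℝ → ℝ} {a b c C : ℝ}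
    (hf : ContinuousOn f (Ioo a b \ {c})) (hC : ∀ x ∈ Ioo a b, |f x| ≤ C) :
    IntegrableOn f (Ioo a b) := by
  have hs : MeasurableSet (Ioo a b \ {c}) := measurableSet_Ioo.diff (measurableSet_singleton c)
  refine (IntegrableOn.of_bound ((measure_mono sdiff_subset).trans_lt measure_Ioo_lt_top)
    (hf.aestronglyMeasurable hs) C ?_).congr_set_ae
    (sdiff_null_ae_eq_self (measure_singleton c)).symm
  exact ae_restrict_of_forall_mem hs fun x hx => hC x hx.1

lemma intervalIntegrable_mul_of_integrableOn {f h : ℝ → ℝ} {a b M : ℝ} (hab : a ≤ b)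
    (hf : IntegrableOn f (Ioo a b)) (hh : Measurable h) (hM : ∀ x, |h x| ≤ M) :
    IntervalIntegrable (fun x => f x * h x) volume a b :=
  (intervalIntegrable_iff_integrableOn_Ioo_of_le hab).2 <|
    hf.mul_bdd hh.aestronglyMeasurable (ae_of_all _ hM)

lemma hasDerivAt_max_zero_sq (t : ℝ) :
    HasDerivAt (fun s : ℝ => max s 0 ^ 2) (2 * max t 0) t := by
  rcases lt_trichotomy t 0 with ht | rfl | ht
  · have h : (fun s : ℝ => max s 0 ^ 2) =ᶠ[𝓝 t] fun _ => 0 := by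
      filter_upwards [Iio_mem_nhds ht] with s hs
      simp [max_eq_right (le_of_lt (mem_Iio.1 hs))]
    simpa [max_eq_right ht.le] using (hasDerivAt_const t (0 : ℝ)).congr_of_eventuallyEq h
  · have h : (fun s : ℝ => max s 0 ^ 2) =O[𝓝 0] fun s => ‖s - 0‖ ^ 2 :=
      Asymptotics.IsBigO.of_bound 1 (Eventually.of_forall fun s => by
        simp only [sub_zero, norm_pow, Real.norm_eq_abs, one_mul, abs_abs]
        refine pow_le_pow_left₀ (abs_nonneg _) ?_ 2
        rcases le_total s 0 with hs | hs <;> simp [hs, abs_of_nonneg])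
    simpa using (h.hasFDerivAt one_lt_two).hasDerivAt
  · have h : (fun s : ℝ => max s 0 ^ 2) =ᶠ[𝓝 t] fun s => s ^ 2 := by
      filter_upwards [Ioi_mem_nhds ht] with s hs
      simp [max_eq_left (le_of_lt (mem_Ioi.1 hs))]
    simpa [max_eq_left ht.le] using (hasDerivAt_pow 2 t).congr_of_eventuallyEq h

lemma sqrt_le_sqrt_div_sqrt_le_sqrt {a b x y : ℝ} (hx : 0 < x) (ha : a * x ≤ y) (hb : y ≤ b * x) :
    √a ≤ √y / √x ∧ √y / √x ≤ √b := by
  rw [← Real.sqrt_div' y hx.le]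
  exact ⟨Real.sqrt_le_sqrt ((le_div_iff₀ hx).2 ha), Real.sqrt_le_sqrt ((div_le_iff₀ hx).2 hb)⟩

section Tent

variable {ξ x : ℝ}

noncomputable def tentU (ξ x : ℝ) : ℝ := max (1 - ξ * |x|) 0

noncomputable def tentPsi (ξ x : ℝ) : ℝ := tentU ξ x ^ 2

noncomputable def tentPhi (ξ x : ℝ) : ℝ := (if 0 < x then 2 else -2) * tentU ξ x

lemma tentU_nonneg : 0 ≤ tentU ξ x := le_max_right _ _

lemma tentU_le_one (hξ : 0 ≤ ξ) : tentU ξ x ≤ 1 :=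
  max_le (by nlinarith [abs_nonneg x]) zero_le_one

lemma continuous_tentU : Continuous (tentU ξ) := by
  unfold tentU; fun_prop

lemma continuous_tentPsi : Continuous (tentPsi ξ) := continuous_tentU.pow 2

lemma tentU_neg : tentU ξ (-x) = tentU ξ x := by
  simp [tentU]

lemma tentU_eq_zero (hξ : 0 < ξ) (hx : ξ⁻¹ ≤ |x|) : tentU ξ x = 0 := by
  refine max_eq_right ?_
  have := mul_le_mul_of_nonneg_left hx hξ.le
  rw [mul_inv_cancel₀ hξ.ne'] at this
  linarith

lemma tentU_of_mem_Icc (hξ : 0 < ξ) (hx : x ∈ Icc 0 ξ⁻¹) : tentU ξ x = 1 - ξ * x := by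
  have := mul_le_mul_of_nonneg_left hx.2 hξ.le
  rw [mul_inv_cancel₀ hξ.ne'] at this
  rw [tentU, abs_of_nonneg hx.1]
  exact max_eq_left (by linarith)

lemma tentPhi_sq : tentPhi ξ x ^ 2 = 4 * tentU ξ x ^ 2 := by
  unfold tentPhi; split_ifs <;> ring

lemma tentPsi_mul_tentPhi_of_pos (hx : 0 < x) :
    tentPsi ξ x * tentPhi ξ x = 2 * tentU ξ x ^ 3 := by
  simp only [tentPsi, tentPhi, if_pos hx]; ring

lemma tentPsi_mul_tentPhi_of_nonpos (hx : x ≤ 0) :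
    tentPsi ξ x * tentPhi ξ x = -(2 * tentU ξ x ^ 3) := by
  simp only [tentPsi, tentPhi, if_neg hx.not_gt]; ring

lemma abs_tentPsi_mul_tentPhi_le (hξ : 0 ≤ ξ) : |tentPsi ξ x * tentPhi ξ x| ≤ 2 := by
  have hu := pow_le_one₀ (n := 3) tentU_nonneg (tentU_le_one (x := x) hξ)
  have h0 : 0 ≤ 2 * tentU ξ x ^ 3 := by have := tentU_nonneg (ξ := ξ) (x := x); positivity
  rcases lt_or_ge 0 x with hx | hx
  · rw [tentPsi_mul_tentPhi_of_pos hx, abs_of_nonneg h0]; linarith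
  · rw [tentPsi_mul_tentPhi_of_nonpos hx, abs_neg, abs_of_nonneg h0]; linarith

lemma tentPhi_sq_add_tentPsi_sq_le (hξ : 0 ≤ ξ) :
    tentPhi ξ x ^ 2 + tentPsi ξ x ^ 2 ≤ 5 * tentU ξ x ^ 2 := by
  have := pow_le_one₀ (n := 2) tentU_nonneg (tentU_le_one (x := x) hξ)
  rw [tentPhi_sq, tentPsi]
  nlinarith [sq_nonneg (tentU ξ x)]

lemma measurable_tentPhi : Measurable (tentPhi ξ) :=
  (Measurable.ite measurableSet_Ioi measurable_const measurable_const).mul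
    continuous_tentU.measurable

lemma hasDerivAt_tentPsi (hx : x ≠ 0) : HasDerivAt (tentPsi ξ) (-(ξ * tentPhi ξ x)) x := by
  have h : HasDerivAt (tentPsi ξ) _ x :=
    (hasDerivAt_max_zero_sq _).comp x (((hasDerivAt_abs hx).const_mul ξ).const_sub 1)
  refine h.congr_deriv ?_
  rcases hx.lt_or_gt with hx | hx
  · simp [tentPhi, tentU, hx.not_gt, sign_neg hx]; ring
  · simp [tentPhi, tentU, hx, sign_pos hx]; ring

lemma integral_tentU_pow (hξ : 0 < ξ) {a : ℝ} (ha : ξ⁻¹ ≤ a) {n : ℕ} (hn : n ≠ 0) :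
    ∫ x in (0 : ℝ)..a, tentU ξ x ^ n = 1 / ((n + 1) * ξ) := by
  have hint : ∀ b c : ℝ, IntervalIntegrable (fun x => tentU ξ x ^ n) volume b c :=
    fun b c => (continuous_tentU.pow n).intervalIntegrable b c
  rw [← integral_add_adjacent_intervals (hint 0 ξ⁻¹) (hint ξ⁻¹ a)]
  have htail : ∫ x in ξ⁻¹..a, tentU ξ x ^ n = 0 := by
    refine (integral_congr fun x hx => ?_).trans integral_zero
    rw [uIcc_of_le ha] at hx
    have : ξ⁻¹ ≤ |x| := hx.1.trans (le_abs_self x)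
    simp [tentU_eq_zero hξ this, hn]
  have hderiv : ∀ x ∈ uIcc 0 ξ⁻¹, HasDerivAt (fun x => -(1 - ξ * x) ^ (n + 1) / ((n + 1) * ξ))
      ((1 - ξ * x) ^ n) x := by
    intro x _
    have h1 : HasDerivAt (fun x : ℝ => 1 - ξ * x) (-ξ) x := by
      simpa using ((hasDerivAt_id x).const_mul ξ).const_sub 1
    refine ((h1.pow (n + 1)).neg.div_const ((n + 1) * ξ)).congr_deriv ?_
    field_simp
    simp
  rw [htail, add_zero, integral_congr fun x hx => by
      rw [tentU_of_mem_Icc hξ (by rwa [uIcc_of_le (by positivity)] at hx)],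
    integral_eq_sub_of_hasDerivAt hderiv
      ((by fun_prop : Continuous fun x => (1 - ξ * x) ^ n).intervalIntegrable _ _)]
  simp [mul_inv_cancel₀ hξ.ne']
  field_simp

lemma integral_neg_tentU_pow (hξ : 0 < ξ) {a : ℝ} (ha : ξ⁻¹ ≤ a) {n : ℕ} (hn : n ≠ 0) :
    ∫ x in (-a)..0, tentU ξ x ^ n = 1 / ((n + 1) * ξ) := by
  have h := integral_comp_neg (a := 0) (b := a) fun x => tentU ξ x ^ n
  simp only [tentU_neg, neg_zero] at h
  rw [← h, integral_tentU_pow hξ ha hn]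

end Tent

section Energy

variable {m ℓ g ξ : ℝ} {ρ0 Q φ ψ : ℝ → ℝ}

lemma RTAdm.const_mul (h : RTAdm m ℓ φ ψ) (t : ℝ) :
    RTAdm m ℓ (fun x => t * φ x) (fun x => t * ψ x) := by
  obtain ⟨hcont, hleft, hright, hdiff, hφ, hψ'⟩ := h
  refine ⟨continuousOn_const.mul hcont, by simp [hleft], by simp [hright],
    fun x hx hx0 => (hdiff x hx hx0).const_mul t, ?_, ?_⟩
  · simpa [mul_pow] using hφ.const_mul (t ^ 2)
  · simpa [deriv_const_mul_field, mul_pow] using hψ'.const_mul (t ^ 2)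

lemma rtConstraint_const_mul (t : ℝ) :
    RTConstraint m ℓ ρ0 (fun x => t * φ x) (fun x => t * ψ x) =
      t ^ 2 * RTConstraint m ℓ ρ0 φ ψ := by
  have h : ∀ x, ρ0 x * ((t * φ x) ^ 2 + (t * ψ x) ^ 2) = t ^ 2 * (ρ0 x * (φ x ^ 2 + ψ x ^ 2)) :=
    fun x => by ring
  simp only [RTConstraint, h, intervalIntegral.integral_const_mul]
  ring

lemma rtEnergy_const_mul (t : ℝ) :
    RTEnergy m ℓ g ξ ρ0 Q (fun x => t * φ x) (fun x => t * ψ x) =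
      t ^ 2 * RTEnergy m ℓ g ξ ρ0 Q φ ψ := by
  have h : ∀ x, Q x * ρ0 x * (t * deriv ψ x + ξ * (t * φ x)) ^ 2 -
      2 * g * ρ0 x * ξ * (t * ψ x) * (t * φ x) =
      t ^ 2 * (Q x * ρ0 x * (deriv ψ x + ξ * φ x) ^ 2 - 2 * g * ρ0 x * ξ * ψ x * φ x) :=
    fun x => by ring
  simp only [RTEnergy, deriv_const_mul_field, h, intervalIntegral.integral_const_mul]
  ring

lemma div_mem_rtEnergyValues (h : RTAdm m ℓ φ ψ) (hJ : 0 < RTConstraint m ℓ ρ0 φ ψ) :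
    RTEnergy m ℓ g ξ ρ0 Q φ ψ / RTConstraint m ℓ ρ0 φ ψ ∈ RTEnergyValues m ℓ g ξ ρ0 Q := by
  set t := (√(RTConstraint m ℓ ρ0 φ ψ))⁻¹
  have ht : t ^ 2 = (RTConstraint m ℓ ρ0 φ ψ)⁻¹ := by rw [inv_pow, Real.sq_sqrt hJ.le]
  refine ⟨_, _, h.const_mul t, ?_, ?_⟩
  · rw [rtConstraint_const_mul, ht, inv_mul_cancel₀ hJ.ne']
  · rw [rtEnergy_const_mul, ht, div_eq_inv_mul]

lemma neg_mul_rtConstraint_le_rtEnergy (hmℓ : -m ≤ ℓ) (hg : 0 ≤ g) (hξ : 0 ≤ ξ)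
    (hρ : ∀ x ∈ Ioo (-m) ℓ, 0 ≤ ρ0 x) (hQ : ∀ x ∈ Ioo (-m) ℓ, 0 ≤ Q x)
    (hB : IntervalIntegrable (fun x => ρ0 x * (φ x ^ 2 + ψ x ^ 2)) volume (-m) ℓ) :
    -(g * ξ) * RTConstraint m ℓ ρ0 φ ψ ≤ RTEnergy m ℓ g ξ ρ0 Q φ ψ := by
  unfold RTEnergy RTConstraint
  by_cases hf : IntervalIntegrable (fun x => Q x * ρ0 x * (deriv ψ x + ξ * φ x) ^ 2 -
      2 * g * ρ0 x * ξ * ψ x * φ x) volume (-m) ℓ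
  · have hmono := integral_mono_on_of_le_Ioo hmℓ (hB.const_mul (-(g * ξ))) hf fun x hx => by
      have := hρ x hx
      nlinarith [mul_nonneg (mul_nonneg (hQ x hx) this) (sq_nonneg (deriv ψ x + ξ * φ x)),
        mul_nonneg (mul_nonneg (mul_nonneg hg hξ) this) (sq_nonneg (φ x - ψ x))]
    rw [intervalIntegral.integral_const_mul] at hmono
    linarith
  · have hJ := integral_mono_on_of_le_Ioo hmℓ intervalIntegrable_const hB fun x hx =>
      mul_nonneg (hρ x hx) (by positivity)
    rw [integral_undef hf]
    rw [intervalIntegral.integral_zero] at hJ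
    nlinarith [mul_nonneg hg hξ]

lemma neg_mul_le_of_mem_rtEnergyValues (hmℓ : -m ≤ ℓ) (hg : 0 ≤ g) (hξ : 0 ≤ ξ)
    (hρ : ∀ x ∈ Ioo (-m) ℓ, 0 ≤ ρ0 x) (hQ : ∀ x ∈ Ioo (-m) ℓ, 0 ≤ Q x) {e : ℝ}
    (he : e ∈ RTEnergyValues m ℓ g ξ ρ0 Q) : -(g * ξ) ≤ e := by
  obtain ⟨φ, ψ, -, hJ, rfl⟩ := he
  have hB : IntervalIntegrable (fun x => ρ0 x * (φ x ^ 2 + ψ x ^ 2)) volume (-m) ℓ := by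
    by_contra hB
    simp [RTConstraint, integral_undef hB] at hJ
  simpa [hJ] using neg_mul_rtConstraint_le_rtEnergy hmℓ hg hξ hρ hQ hB

lemma rtEnergy_eq_of_deriv_add_eq_zero (h : ∀ᵐ x, deriv ψ x + ξ * φ x = 0) :
    RTEnergy m ℓ g ξ ρ0 Q φ ψ = -(g * ξ) * ∫ x in (-m)..ℓ, ρ0 x * (ψ x * φ x) := by
  rw [RTEnergy, integral_congr_ae (g := fun x => -(2 * g * ξ) * (ρ0 x * (ψ x * φ x)))
    (h.mono fun x hx _ => by simp only [hx]; ring), intervalIntegral.integral_const_mul]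
  ring

end Energy

section TentPair

variable {m ℓ ξ C K L : ℝ} {ρ0 : ℝ → ℝ}

lemma rtAdm_tentPhi_tentPsi (hξ : 0 < ξ) (hm : ξ⁻¹ ≤ m) (hℓ : ξ⁻¹ ≤ ℓ) :
    RTAdm m ℓ (tentPhi ξ) (tentPsi ξ) := by
  have hξ' := inv_pos.2 hξ
  have hu : Continuous fun x => 4 * tentU ξ x ^ 2 := continuous_tentU.pow 2 |>.const_mul 4
  refine ⟨continuous_tentPsi.continuousOn, ?_, ?_,
    fun x _ hx => (hasDerivAt_tentPsi hx).differentiableAt, ?_, ?_⟩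
  · simp [tentPsi, tentU_eq_zero hξ (x := -m) (by rwa [abs_neg, abs_of_pos (hξ'.trans_le hm)])]
  · simp [tentPsi, tentU_eq_zero hξ (x := ℓ) (by rwa [abs_of_pos (hξ'.trans_le hℓ)])]
  · simpa only [tentPhi_sq] using hu.intervalIntegrable (-m) ℓ
  · refine ((hu.const_mul (ξ ^ 2)).intervalIntegrable (-m) ℓ).congr_ae ?_
    filter_upwards [ae_restrict_of_ae (Measure.ae_ne volume 0)] with x hx
    rw [(hasDerivAt_tentPsi hx).deriv, neg_sq, mul_pow, tentPhi_sq]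

lemma intervalIntegrable_mul_tentPhi_sq_add_tentPsi_sq {f : ℝ → ℝ} {a b : ℝ} (hξ : 0 ≤ ξ)
    (hab : a ≤ b) (hf : IntegrableOn f (Ioo a b)) :
    IntervalIntegrable (fun x => f x * (tentPhi ξ x ^ 2 + tentPsi ξ x ^ 2)) volume a b := by
  refine intervalIntegrable_mul_of_integrableOn (M := 5) hab hf
    ((measurable_tentPhi.pow_const 2).add (continuous_tentPsi.measurable.pow_const 2)) fun x => ?_
  rw [abs_of_nonneg (by positivity)]
  nlinarith [tentPhi_sq_add_tentPsi_sq_le (x := x) hξ,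
    pow_le_one₀ (n := 2) tentU_nonneg (tentU_le_one (x := x) hξ)]

lemma intervalIntegrable_mul_tentPsi_mul_tentPhi {f : ℝ → ℝ} {a b : ℝ} (hξ : 0 ≤ ξ)
    (hab : a ≤ b) (hf : IntegrableOn f (Ioo a b)) :
    IntervalIntegrable (fun x => f x * (tentPsi ξ x * tentPhi ξ x)) volume a b :=
  intervalIntegrable_mul_of_integrableOn hab hf
    (continuous_tentPsi.measurable.mul measurable_tentPhi) fun _ => abs_tentPsi_mul_tentPhi_le hξ

lemma rtConstraint_tentPhi_tentPsi_le (hξ : 0 < ξ) (hm : ξ⁻¹ ≤ m) (hℓ : ξ⁻¹ ≤ ℓ)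
    (hρint : IntegrableOn ρ0 (Ioo (-m) ℓ)) (hρ : ∀ x ∈ Ioo (-m) ℓ, 0 ≤ ρ0 x ∧ ρ0 x ≤ C) :
    RTConstraint m ℓ ρ0 (tentPhi ξ) (tentPsi ξ) ≤ 5 * C / (3 * ξ) := by
  have hξ' := inv_pos.2 hξ
  have hu : ∀ a b : ℝ, IntervalIntegrable (fun x => tentU ξ x ^ 2) volume a b :=
    (continuous_tentU.pow 2).intervalIntegrable
  have hu2 : ∫ x in (-m)..ℓ, tentU ξ x ^ 2 = 2 / (3 * ξ) := by
    rw [← integral_add_adjacent_intervals (hu (-m) 0) (hu 0 ℓ),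
      integral_neg_tentU_pow hξ hm two_ne_zero, integral_tentU_pow hξ hℓ two_ne_zero]
    field_simp
    norm_num
  have hmono := integral_mono_on_of_le_Ioo (by linarith)
    (intervalIntegrable_mul_tentPhi_sq_add_tentPsi_sq hξ.le (by linarith) hρint)
    ((hu (-m) ℓ).const_mul (5 * C)) fun x hx =>
      calc ρ0 x * (tentPhi ξ x ^ 2 + tentPsi ξ x ^ 2) ≤ ρ0 x * (5 * tentU ξ x ^ 2) :=
            mul_le_mul_of_nonneg_left (tentPhi_sq_add_tentPsi_sq_le hξ.le) (hρ x hx).1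
        _ ≤ C * (5 * tentU ξ x ^ 2) := mul_le_mul_of_nonneg_right (hρ x hx).2 (by positivity)
        _ = 5 * C * tentU ξ x ^ 2 := by ring
  rw [intervalIntegral.integral_const_mul, hu2] at hmono
  rw [RTConstraint]
  linarith [show 5 * C * (2 / (3 * ξ)) = 2 * (5 * C / (3 * ξ)) by ring]

lemma le_integral_mul_tentPsi_mul_tentPhi_Ioo_pos (hξ : 0 < ξ) (hℓ : ξ⁻¹ ≤ ℓ) (hK : 0 ≤ K)
    (hρint : IntegrableOn ρ0 (Ioo 0 ℓ)) (hρ : ∀ x ∈ Ioo 0 ℓ, L - K * x ≤ ρ0 x) :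
    (L - K / ξ) / (2 * ξ) ≤ ∫ x in (0 : ℝ)..ℓ, ρ0 x * (tentPsi ξ x * tentPhi ξ x) := by
  have hℓ0 : 0 ≤ ℓ := (inv_pos.2 hξ).le.trans hℓ
  have hu3 : Continuous fun x => tentU ξ x ^ 3 := continuous_tentU.pow 3
  have hmono := integral_mono_on_of_le_Ioo hℓ0
    ((hu3.const_mul (2 * (L - K / ξ))).intervalIntegrable _ _)
    (intervalIntegrable_mul_tentPsi_mul_tentPhi hξ.le hℓ0 hρint) fun x hx => by
      rw [tentPsi_mul_tentPhi_of_pos hx.1]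
      rcases lt_or_ge x ξ⁻¹ with hxξ | hxξ
      · have : L - K / ξ ≤ ρ0 x := by
          have := mul_le_mul_of_nonneg_left hxξ.le hK
          rw [div_eq_mul_inv]
          linarith [hρ x hx]
        have := tentU_nonneg (ξ := ξ) (x := x)
        nlinarith [pow_nonneg this 3]
      · simp [tentU_eq_zero hξ (by rwa [abs_of_pos hx.1])]
  rw [intervalIntegral.integral_const_mul, integral_tentU_pow hξ hℓ three_ne_zero] at hmono
  convert hmono using 1
  field_simp
  norm_num

lemma le_integral_mul_tentPsi_mul_tentPhi_Ioo_neg (hξ : 0 < ξ) (hm : ξ⁻¹ ≤ m) (hK : 0 ≤ K)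
    (hρint : IntegrableOn ρ0 (Ioo (-m) 0)) (hρ : ∀ x ∈ Ioo (-m) 0, ρ0 x ≤ L - K * x) :
    -(L + K / ξ) / (2 * ξ) ≤ ∫ x in (-m)..0, ρ0 x * (tentPsi ξ x * tentPhi ξ x) := by
  have hm0 : -m ≤ 0 := by linarith [(inv_pos.2 hξ).le.trans hm]
  have hu3 : Continuous fun x => tentU ξ x ^ 3 := continuous_tentU.pow 3
  have hmono := integral_mono_on_of_le_Ioo hm0
    ((hu3.const_mul (-(2 * (L + K / ξ)))).intervalIntegrable _ _)
    (intervalIntegrable_mul_tentPsi_mul_tentPhi hξ.le hm0 hρint) fun x hx => by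
      rw [tentPsi_mul_tentPhi_of_nonpos hx.2.le]
      rcases lt_or_ge (-x) ξ⁻¹ with hxξ | hxξ
      · have : ρ0 x ≤ L + K / ξ := by
          have := mul_le_mul_of_nonneg_left hxξ.le hK
          rw [div_eq_mul_inv]
          linarith [hρ x hx]
        have := tentU_nonneg (ξ := ξ) (x := x)
        nlinarith [pow_nonneg this 3]
      · simp [tentU_eq_zero hξ (by rwa [abs_of_neg hx.2])]
  rw [intervalIntegral.integral_const_mul, integral_neg_tentU_pow hξ hm three_ne_zero] at hmono
  convert hmono using 1
  field_simp
  norm_num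

lemma div_le_integral_mul_tentPsi_mul_tentPhi {rhoP rhoM : ℝ} (hξ : 0 < ξ) (hm : ξ⁻¹ ≤ m)
    (hℓ : ξ⁻¹ ≤ ℓ) (hρint : IntegrableOn ρ0 (Ioo (-m) ℓ)) (hK : 0 ≤ K)
    (hP : ∀ x ∈ Ioo 0 ℓ, rhoP - K * x ≤ ρ0 x) (hM : ∀ x ∈ Ioo (-m) 0, ρ0 x ≤ rhoM - K * x)
    (hξK : 4 * K ≤ (rhoP - rhoM) * ξ) :
    (rhoP - rhoM) / (4 * ξ) ≤ ∫ x in (-m)..ℓ, ρ0 x * (tentPsi ξ x * tentPhi ξ x) := by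
  have hm0 : -m ≤ 0 := by linarith [(inv_pos.2 hξ).le.trans hm]
  have h0ℓ : 0 ≤ ℓ := (inv_pos.2 hξ).le.trans hℓ
  have hρM := hρint.mono_set (Ioo_subset_Ioo_right h0ℓ)
  have hρP := hρint.mono_set (Ioo_subset_Ioo_left hm0)
  have hKξ : 4 * (K / ξ) ≤ rhoP - rhoM := by
    rw [mul_div_assoc', div_le_iff₀ hξ]; exact hξK
  rw [← integral_add_adjacent_intervals
    (intervalIntegrable_mul_tentPsi_mul_tentPhi hξ.le hm0 hρM)
    (intervalIntegrable_mul_tentPsi_mul_tentPhi hξ.le h0ℓ hρP)]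
  calc (rhoP - rhoM) / (4 * ξ) ≤ (rhoP - rhoM - 2 * (K / ξ)) / (2 * ξ) := by
        rw [div_le_div_iff₀ (by positivity) (by positivity)]
        nlinarith
    _ = -(rhoM + K / ξ) / (2 * ξ) + (rhoP - K / ξ) / (2 * ξ) := by ring
    _ ≤ _ := add_le_add
        (le_integral_mul_tentPsi_mul_tentPhi_Ioo_neg hξ hm hK hρM fun x hx => by
          linarith [hM x hx])
        (le_integral_mul_tentPsi_mul_tentPhi_Ioo_pos hξ hℓ hK hρP hP)

end TentPair

lemma exists_mem_rtEnergyValues_le_neg_mul {m ℓ g ξ C K rhoP rhoM : ℝ} {ρ0 Q : ℝ → ℝ}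
    (hg : 0 < g) (hξ : 0 < ξ) (hm : ξ⁻¹ ≤ m) (hℓ : ξ⁻¹ ≤ ℓ)
    (hρint : IntegrableOn ρ0 (Ioo (-m) ℓ)) (hρ : ∀ x ∈ Ioo (-m) ℓ, 0 ≤ ρ0 x ∧ ρ0 x ≤ C)
    (hQ : ∀ x ∈ Ioo (-m) ℓ, 0 ≤ Q x) (hK : 0 ≤ K)
    (hP : ∀ x ∈ Ioo 0 ℓ, rhoP - K * x ≤ ρ0 x) (hM : ∀ x ∈ Ioo (-m) 0, ρ0 x ≤ rhoM - K * x)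
    (hjump : rhoM < rhoP) (hξK : 4 * K ≤ (rhoP - rhoM) * ξ) :
    ∃ e ∈ RTEnergyValues m ℓ g ξ ρ0 Q, e ≤ -(3 * g * (rhoP - rhoM) / (20 * C)) * ξ := by
  have hξ' := inv_pos.2 hξ
  set W := ∫ x in (-m)..ℓ, ρ0 x * (tentPsi ξ x * tentPhi ξ x)
  set J := RTConstraint m ℓ ρ0 (tentPhi ξ) (tentPsi ξ)
  have hW : (rhoP - rhoM) / (4 * ξ) ≤ W :=
    div_le_integral_mul_tentPsi_mul_tentPhi hξ hm hℓ hρint hK hP hM hξK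
  have hE : RTEnergy m ℓ g ξ ρ0 Q (tentPhi ξ) (tentPsi ξ) = -(g * ξ) * W :=
    rtEnergy_eq_of_deriv_add_eq_zero ((Measure.ae_ne volume 0).mono fun x hx => by
      rw [(hasDerivAt_tentPsi hx).deriv]; ring)
  have hWJ : W ≤ J := by
    have := neg_mul_rtConstraint_le_rtEnergy (by linarith) hg.le hξ.le (fun x hx => (hρ x hx).1) hQ
      (intervalIntegrable_mul_tentPhi_sq_add_tentPsi_sq hξ.le (by linarith) hρint)
    rw [hE] at this
    nlinarith [mul_pos hg hξ]
  have hJ := rtConstraint_tentPhi_tentPsi_le hξ hm hℓ hρint hρ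
  have hWpos : 0 < W := lt_of_lt_of_le (div_pos (sub_pos.2 hjump) (by positivity)) hW
  have hJpos : 0 < J := hWpos.trans_le hWJ
  have hC : 0 < C := by
    have := hJpos.trans_le hJ
    rw [div_pos_iff_of_pos_right (by positivity)] at this
    linarith
  refine ⟨_, div_mem_rtEnergyValues (rtAdm_tentPhi_tentPsi hξ hm hℓ) hJpos, ?_⟩
  rw [hE, mul_div_assoc]
  calc -(g * ξ) * (W / J) ≤ -(g * ξ) * ((rhoP - rhoM) / (4 * ξ) / (5 * C / (3 * ξ))) :=
        mul_le_mul_of_nonpos_left (div_le_div₀ hWpos.le hW hJpos hJ) (by nlinarith [mul_pos hg hξ])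
    _ = _ := by field_simp; ring

lemma neg_sInf_rtEnergyValues_mem_Icc {m ℓ g ξ C K rhoP rhoM : ℝ} {ρ0 Q : ℝ → ℝ}
    (hg : 0 < g) (hξ : 0 < ξ) (hm : ξ⁻¹ ≤ m) (hℓ : ξ⁻¹ ≤ ℓ)
    (hρint : IntegrableOn ρ0 (Ioo (-m) ℓ)) (hρ : ∀ x ∈ Ioo (-m) ℓ, 0 ≤ ρ0 x ∧ ρ0 x ≤ C)
    (hQ : ∀ x ∈ Ioo (-m) ℓ, 0 ≤ Q x) (hK : 0 ≤ K)
    (hP : ∀ x ∈ Ioo 0 ℓ, rhoP - K * x ≤ ρ0 x) (hM : ∀ x ∈ Ioo (-m) 0, ρ0 x ≤ rhoM - K * x)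
    (hjump : rhoM < rhoP) (hξK : 4 * K ≤ (rhoP - rhoM) * ξ) :
    -sInf (RTEnergyValues m ℓ g ξ ρ0 Q) ∈ Icc (3 * g * (rhoP - rhoM) / (20 * C) * ξ) (g * ξ) := by
  obtain ⟨e, he, hle⟩ :=
    exists_mem_rtEnergyValues_le_neg_mul hg hξ hm hℓ hρint hρ hQ hK hP hM hjump hξK
  have hlow : ∀ e ∈ RTEnergyValues m ℓ g ξ ρ0 Q, -(g * ξ) ≤ e := fun e he =>
    neg_mul_le_of_mem_rtEnergyValues (by linarith [inv_pos.2 hξ]) hg.le hξ.le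
      (fun x hx => (hρ x hx).1) hQ he
  constructor
  · linarith [csInf_le ⟨_, hlow⟩ he]
  · linarith [le_csInf ⟨e, he⟩ hlow]

theorem eigenvalue_growth_general
    (m ℓ g : ℝ) (hm : 0 < m) (hℓ : 0 < ℓ) (hg : 0 < g)
    (ρ0 Q : ℝ → ℝ) (rhoP rhoM : ℝ) (hjump : rhoM < rhoP)
    (c C q Q' : ℝ) (hc : 0 < c) (hq : 0 < q)
    (hρbd : ∀ x ∈ Ioo (-m) ℓ, c ≤ ρ0 x ∧ ρ0 x ≤ C)
    (hQbd : ∀ x ∈ Ioo (-m) ℓ, q ≤ Q x ∧ Q x ≤ Q')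
    (hode : ∀ x ∈ Ioo (-m) ℓ, x ≠ 0 → HasDerivAt ρ0 (-g * ρ0 x / Q x) x)
    (hlimP : Filter.Tendsto ρ0 (nhdsWithin 0 (Ioi 0)) (nhds rhoP))
    (hlimM : Filter.Tendsto ρ0 (nhdsWithin 0 (Iio 0)) (nhds rhoM)) :
    ∃ C0 C1 C2 : ℝ, 0 < C0 ∧ 0 < C1 ∧ 0 < C2 ∧
      (∀ ξ : ℝ, C0 ≤ ξ →
        C1 * ξ - C2 ≤ -(sInf (RTEnergyValues m ℓ g ξ ρ0 Q)))
      ∧ ∃ Cr : ℝ, 0 < Cr ∧ ∀ ξ : ℝ, C0 ≤ ξ →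
          Cr ≤ Real.sqrt (-(sInf (RTEnergyValues m ℓ g ξ ρ0 Q))) / Real.sqrt ξ
          ∧ Real.sqrt (-(sInf (RTEnergyValues m ℓ g ξ ρ0 Q))) / Real.sqrt ξ
              ≤ Real.sqrt g := by
  have hρ : ∀ x ∈ Ioo (-m) ℓ, 0 ≤ ρ0 x ∧ ρ0 x ≤ C :=
    fun x hx => ⟨hc.le.trans (hρbd x hx).1, (hρbd x hx).2⟩
  have hQ : ∀ x ∈ Ioo (-m) ℓ, 0 ≤ Q x := fun x hx => hq.le.trans (hQbd x hx).1
  have hC : 0 < C := hc.trans_le ((hρbd 0 ⟨by linarith, hℓ⟩).1.trans (hρbd 0 ⟨by linarith, hℓ⟩).2)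
  obtain ⟨hP, hM⟩ := steadyState_bounds_near_interface hm.le hℓ.le hg.le hq hρ
    (fun x hx => (hQbd x hx).1) hode hlimP hlimM
  have hρint : IntegrableOn ρ0 (Ioo (-m) ℓ) := integrableOn_Ioo_of_continuousOn_diff (c := 0)
    (fun x hx => (hode x hx.1 hx.2).continuousAt.continuousWithinAt)
    fun x hx => (abs_of_nonneg (hρ x hx).1).trans_le (hρ x hx).2
  set K := g * C / q
  have hK : 0 ≤ K := by positivity
  set C1 := 3 * g * (rhoP - rhoM) / (20 * C)
  have hC1 : 0 < C1 := div_pos (by nlinarith) (by linarith)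
  have hC0 : 0 < m⁻¹ + ℓ⁻¹ + 4 * K / (rhoP - rhoM) := by positivity
  have hbounds : ∀ ξ, m⁻¹ + ℓ⁻¹ + 4 * K / (rhoP - rhoM) ≤ ξ →
      -sInf (RTEnergyValues m ℓ g ξ ρ0 Q) ∈ Icc (C1 * ξ) (g * ξ) := fun ξ hξ => by
    have hm' := inv_pos.2 hm
    have hℓ' := inv_pos.2 hℓ
    have hKd : 0 ≤ 4 * K / (rhoP - rhoM) := by positivity
    refine neg_sInf_rtEnergyValues_mem_Icc hg (hC0.trans_le hξ) (inv_le_of_inv_le₀ hm (by linarith))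
      (inv_le_of_inv_le₀ hℓ (by linarith)) hρint hρ hQ hK hP hM hjump ?_
    rw [← div_le_iff₀' (sub_pos.2 hjump)]
    linarith
  refine ⟨_, C1, 1, hC0, hC1, one_pos, fun ξ hξ => by linarith [(hbounds ξ hξ).1], √C1,
    Real.sqrt_pos.2 hC1, fun ξ hξ => sqrt_le_sqrt_div_sqrt_le_sqrt (hC0.trans_le hξ)
      (hbounds ξ hξ).1 (hbounds ξ hξ).2⟩

/-- Growth of the variational eigenvalue: there are `C₀,C₁,C₂ > 0` (depending only on
`ρ₀±, P±, g, m, ℓ`) with `λ²(|ξ|) = -inf_𝒜 E ≥ C₁|ξ| - C₂` for `|ξ| ≥ C₀`; combined with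
`E ≥ -g|ξ|` this gives `0 < C ≤ λ(|ξ|)/√|ξ| ≤ √g` for all sufficiently large `|ξ|`. -/
theorem eigenvalue_growth
    (m ℓ g : ℝ) (hm : 0 < m) (hℓ : 0 < ℓ) (hg : 0 < g)
    (ρ0 Q : ℝ → ℝ) (rhoP rhoM : ℝ) (hjump : rhoM < rhoP)
    (c C q Q' : ℝ) (hc : 0 < c) (hq : 0 < q)
    (hρbd : ∀ x ∈ Ioo (-m) ℓ, c ≤ ρ0 x ∧ ρ0 x ≤ C)
    (hQbd : ∀ x ∈ Ioo (-m) ℓ, q ≤ Q x ∧ Q x ≤ Q')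
    (hcontM : ContinuousOn ρ0 (Ioo (-m) 0)) (hcontP : ContinuousOn ρ0 (Ioo 0 ℓ))
    (hQcontM : ContinuousOn Q (Ioo (-m) 0)) (hQcontP : ContinuousOn Q (Ioo 0 ℓ))
    (hode : ∀ x ∈ Ioo (-m) ℓ, x ≠ 0 → HasDerivAt ρ0 (-g * ρ0 x / Q x) x)
    (hlimP : Filter.Tendsto ρ0 (nhdsWithin 0 (Ioi 0)) (nhds rhoP))
    (hlimM : Filter.Tendsto ρ0 (nhdsWithin 0 (Iio 0)) (nhds rhoM)) :
    ∃ C0 C1 C2 : ℝ, 0 < C0 ∧ 0 < C1 ∧ 0 < C2 ∧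
      (∀ ξ : ℝ, C0 ≤ ξ →
        C1 * ξ - C2 ≤ -(sInf (RTEnergyValues m ℓ g ξ ρ0 Q)))
      ∧ ∃ Cr : ℝ, 0 < Cr ∧ ∀ ξ : ℝ, C0 ≤ ξ →
          Cr ≤ Real.sqrt (-(sInf (RTEnergyValues m ℓ g ξ ρ0 Q))) / Real.sqrt ξ
          ∧ Real.sqrt (-(sInf (RTEnergyValues m ℓ g ξ ρ0 Q))) / Real.sqrt ξ
              ≤ Real.sqrt g :=
  eigenvalue_growth_general m ℓ g hm hℓ hg ρ0 Q rhoP rhoM hjump c C q Q' hc hq hρbd hQbd hode hlimP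
    hlimM
end
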